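/- Suppose a² < 4q, a ≠ 2, and θ/π is irrational, where θ = arccos(a/(2√q)) ∈ [0, π]. Then there exist infinitely many positive integers X with |M(X)| > q^{X/2} (so the Mertens conjecture for an elliptic curve over F_q with Frobenius trace a is false). -/

import Mathlib

open Real Filter

/-!
Writing `a = 2√q cos θ` with `θ = arccos (a / (2√q))`, the partial sums obey
`M(X + 2) = a M(X + 1) - q M(X)` for `X ≥ 1`, so
`M(X) = q^{X/2} (cos Xθ + Q sin Xθ) = q^{X/2} √(1 + Q²) cos (Xθ - arctan Q)`,
where `Q` is fixed by `M(1) = 1`. The condition `a ≠ 2` says exactly `Q ≠ 0`, so the amplitude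
`√(1 + Q²)` exceeds `1`; since `θ / π` is irrational, the angles `Xθ` come arbitrarily close to
`arctan Q` modulo `2π` for arbitrarily large `X`, and there `M(X) > q^{X/2}`.
-/

/-- The coefficient sequence `c_N` with `c_0 = 1`, `c_1 = a - q - 1`,
`c_2 = a*c_1 - q*c_0 + q`, and `c_N = a*c_{N-1} - q*c_{N-2}` for `N ≥ 3`;
these are the Taylor coefficients at `u = 0` of `(1-u)(1-qu)/(1-au+qu²)`,
the reciprocal of the zeta function of an elliptic curve over `F_q` with
Frobenius trace `a`. -/
def mertC (q a : ℤ) : ℕ → ℤ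
  | 0 => 1
  | 1 => a - q - 1
  | 2 => a * (a - q - 1) - q * 1 + q
  | (N + 3) => a * mertC q a (N + 2) - q * mertC q a (N + 1)

/-- `M(X) = ∑_{N=0}^{X-1} c_N`, the Mertens summatory function of the
Möbius function of an elliptic curve over `F_q` with Frobenius trace `a`. -/
def mertM (q a : ℤ) (X : ℕ) : ℤ := ∑ N ∈ Finset.range X, mertC q a N

theorem eq_of_rec_two_of_eq_init {R : Type*} [Ring R] {u v : ℕ → R} {b c : R}
    (hu : ∀ n, u (n + 2) = b * u (n + 1) - c * u n)
    (hv : ∀ n, v (n + 2) = b * v (n + 1) - c * v n)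
    (h0 : u 0 = v 0) (h1 : u 1 = v 1) : ∀ n, u n = v n
  | 0 => h0
  | 1 => h1
  | n + 2 => by
    rw [hu, hv, eq_of_rec_two_of_eq_init hu hv h0 h1 n,
      eq_of_rec_two_of_eq_init hu hv h0 h1 (n + 1)]

section Mertens

variable (q a : ℤ)

theorem mertM_one : mertM q a 1 = 1 := by
  simp [mertM, mertC]

theorem mertM_two : mertM q a 2 = a - q := by
  simp [mertM, Finset.sum_range_succ, mertC]

theorem mertM_succ (X : ℕ) : mertM q a (X + 1) = mertM q a X + mertC q a X :=
  Finset.sum_range_succ _ _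

theorem mertM_add_three (X : ℕ) :
    mertM q a (X + 3) = a * mertM q a (X + 2) - q * mertM q a (X + 1) := by
  induction X with
  | zero =>
    simp only [mertM, Finset.sum_range_succ, Finset.sum_range_zero, mertC]
    ring
  | succ n ih =>
    have hC : mertC q a (n + 3) = a * mertC q a (n + 2) - q * mertC q a (n + 1) := rfl
    show mertM q a (n + 3 + 1) = a * mertM q a (n + 2 + 1) - q * mertM q a (n + 1 + 1)
    linear_combination mertM_succ q a (n + 3) + ih + hC - a * mertM_succ q a (n + 2)
      + q * mertM_succ q a (n + 1)

end Mertens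

noncomputable def trigSeq (r θ Q : ℝ) (n : ℕ) : ℝ := r ^ n * (cos (n * θ) + Q * sin (n * θ))

section TrigSeq

variable (r θ Q : ℝ)

theorem trigSeq_zero : trigSeq r θ Q 0 = 1 := by
  simp [trigSeq]

theorem trigSeq_one : trigSeq r θ Q 1 = r * (cos θ + Q * sin θ) := by
  simp [trigSeq]

theorem trigSeq_add_two (n : ℕ) :
    trigSeq r θ Q (n + 2) = 2 * r * cos θ * trigSeq r θ Q (n + 1) - r ^ 2 * trigSeq r θ Q n := by
  have h2 : ((n + 2 : ℕ) : ℝ) * θ = (n + 1 : ℕ) * θ + θ := by push_cast; ring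
  have h0 : (n : ℝ) * θ = (n + 1 : ℕ) * θ - θ := by push_cast; ring
  simp only [trigSeq, h2, h0, cos_add, sin_add, cos_sub, sin_sub]
  ring

theorem cos_add_mul_sin_eq_sqrt_mul_cos_sub_arctan (x : ℝ) :
    cos x + Q * sin x = √(1 + Q ^ 2) * cos (x - arctan Q) := by
  rw [cos_sub, cos_arctan, sin_arctan]
  field_simp

end TrigSeq

theorem mertM_eq_trigSeq {q a : ℤ} {r θ Q : ℝ} (hr : r ^ 2 = q) (ha : 2 * r * cos θ = a)
    (h1 : r * (cos θ + Q * sin θ) = 1) (X : ℕ) :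
    (mertM q a (X + 1) : ℝ) = trigSeq r θ Q (X + 1) := by
  have hrec : ∀ n, trigSeq r θ Q (n + 2) = a * trigSeq r θ Q (n + 1) - q * trigSeq r θ Q n := by
    intro n
    rw [trigSeq_add_two, ha, hr]
  refine eq_of_rec_two_of_eq_init (u := fun n ↦ (mertM q a (n + 1) : ℝ))
    (v := fun n ↦ trigSeq r θ Q (n + 1)) (b := a) (c := q) (fun n ↦ ?_) (fun n ↦ hrec (n + 1))
    ?_ ?_ X
  · exact_mod_cast mertM_add_three q a n
  · simp [mertM_one, trigSeq_one, h1]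
  · simp [mertM_two, hrec 0, trigSeq_one, h1, trigSeq_zero]

theorem frequently_lt_cos_nat_mul_sub {θ : ℝ} (hθ : Irrational (θ / π)) (ψ : ℝ) {c : ℝ}
    (hc : c < 1) : ∃ᶠ n : ℕ in atTop, c < cos (n * θ - ψ) := by
  have : Fact (0 < 2 * π) := ⟨two_pi_pos⟩
  -- `Real.Angle` does not inherit this instance from `AddCircle (2 * π)`.
  have : CompactSpace Angle := inferInstanceAs (CompactSpace (AddCircle (2 * π)))
  have hdense : DenseRange (· • (θ : Angle) : ℤ → Angle) :=
    AddCircle.denseRange_zsmul_coe_iff.2 (by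
      rw [← div_div, div_right_comm]; exact hθ.div_natCast two_ne_zero)
  -- On a compact group, each limit of integer multiples is a cluster point of the natural ones.
  have hψ : MapClusterPt (ψ : Angle) atTop (· • (θ : Angle) : ℕ → Angle) :=
    ((mapClusterPt_atTop_nsmul_tfae _ _).out 0 3).2 (hdense _)
  have hU : {x : Angle | c < Angle.cos (x - ψ)} ∈ nhds (ψ : Angle) :=
    (isOpen_lt continuous_const (Angle.continuous_cos.comp (continuous_sub_right _))).mem_nhds
      (by simpa using hc)
  refine (hψ.frequently hU).mono fun n hn ↦ ?_
  rwa [← Angle.coe_nsmul, ← Angle.coe_sub, Angle.cos_coe, nsmul_eq_mul] at hn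

theorem frequently_one_lt_cos_add_mul_sin {θ Q : ℝ} (hθ : Irrational (θ / π)) (hQ : Q ≠ 0) :
    ∃ᶠ n : ℕ in atTop, 1 < cos (n * θ) + Q * sin (n * θ) := by
  have hR : 1 < √(1 + Q ^ 2) := by
    rw [lt_sqrt zero_le_one]
    linarith [pow_pos (abs_pos.2 hQ) 2, sq_abs Q]
  have hR0 : 0 < √(1 + Q ^ 2) := one_pos.trans hR
  refine (frequently_lt_cos_nat_mul_sub hθ (arctan Q)
    ((div_lt_one hR0).2 hR : 1 / √(1 + Q ^ 2) < 1)).mono fun n hn ↦ ?_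
  rw [cos_add_mul_sin_eq_sqrt_mul_cos_sub_arctan]
  calc (1 : ℝ) = √(1 + Q ^ 2) * (1 / √(1 + Q ^ 2)) := by field_simp
    _ < √(1 + Q ^ 2) * cos (n * θ - arctan Q) := mul_lt_mul_of_pos_left hn hR0

theorem abs_div_two_sqrt_lt_one {a q : ℝ} (h : a ^ 2 < 4 * q) : |a / (2 * √q)| < 1 := by
  have hq : 0 < q := by nlinarith [sq_nonneg a]
  rw [← sq_lt_one_iff_abs_lt_one, div_pow, mul_pow, sq_sqrt hq.le, div_lt_one (by positivity)]
  linarith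

theorem mertens_conjecture_false_of_trace_ne_two_general (q a : ℤ)
    (ha : a ^ 2 < 4 * q) (ha2 : a ≠ 2)
    (hθ : Irrational (Real.arccos ((a : ℝ) / (2 * Real.sqrt (q : ℝ))) / Real.pi)) :
    ∀ X₀ : ℕ, ∃ X : ℕ, X₀ ≤ X ∧ 1 ≤ X ∧
      |(mertM q a X : ℝ)| > (q : ℝ) ^ ((X : ℝ) / 2) := by
  intro X₀
  have hq : (0 : ℝ) < q := by exact_mod_cast (by nlinarith : (0 : ℤ) < q)
  have haR : (a : ℝ) ^ 2 < 4 * q := by exact_mod_cast ha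
  obtain ⟨hx₁, hx₂⟩ := abs_lt.1 (abs_div_two_sqrt_lt_one haR)
  set r := √(q : ℝ)
  set θ := arccos ((a : ℝ) / (2 * r))
  have hr0 : 0 < r := sqrt_pos.2 hq
  have hr : r ^ 2 = q := sq_sqrt hq.le
  have hcos : 2 * r * cos θ = a := by
    rw [cos_arccos hx₁.le hx₂.le]
    field_simp
  have hsin : 0 < sin θ := sin_pos_of_pos_of_lt_pi (arccos_pos.2 hx₂) (arccos_lt_pi.2 hx₁)
  set Q := (1 / r - cos θ) / sin θ
  have h1 : r * (cos θ + Q * sin θ) = 1 := by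
    rw [div_mul_cancel₀ _ hsin.ne', add_sub_cancel, mul_one_div_cancel hr0.ne']
  have hQ : Q ≠ 0 := by
    intro hQ0
    rw [hQ0, zero_mul, add_zero] at h1
    exact ha2 (by exact_mod_cast (by linarith : (a : ℝ) = 2))
  obtain ⟨X, hX, hlt⟩ := frequently_atTop.1 (frequently_one_lt_cos_add_mul_sin hθ hQ) (X₀ + 1)
  obtain ⟨n, rfl⟩ : ∃ n, X = n + 1 := ⟨X - 1, by omega⟩
  refine ⟨n + 1, by omega, by omega, ?_⟩
  rw [mertM_eq_trigSeq hr hcos h1, rpow_div_two_eq_sqrt _ hq.le, rpow_natCast]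
  calc r ^ (n + 1) = r ^ (n + 1) * 1 := (mul_one _).symm
    _ < trigSeq r θ Q (n + 1) := mul_lt_mul_of_pos_left hlt (pow_pos hr0 _)
    _ ≤ |trigSeq r θ Q (n + 1)| := le_abs_self _

theorem mertens_conjecture_false_of_trace_ne_two (q a : ℤ) (hq : 2 ≤ q)
    (ha : a ^ 2 < 4 * q) (ha2 : a ≠ 2)
    (hθ : Irrational (Real.arccos ((a : ℝ) / (2 * Real.sqrt (q : ℝ))) / Real.pi)) :
    ∀ X₀ : ℕ, ∃ X : ℕ, X₀ ≤ X ∧ 1 ≤ X ∧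
      |(mertM q a X : ℝ)| > (q : ℝ) ^ ((X : ℝ) / 2) :=
  mertens_conjecture_false_of_trace_ne_two_general q a ha ha2 hθ
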